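/- arXiv:2410.05655 — 3 statements merged into one kernel-verified Lean document; each statement's English description precedes it below -/
import Mathlib

section
/- Fix ε ≥ 0 and suppose μ* ∈ F minimizes the objective over F, i.e., for all μ ∈ F, Σ_{a : μ*(a)>0} π(a)²r(a)²/μ*(a) ≤ Σ_{a : μ(a)>0} π(a)²r(a)²/μ(a). Then the variance of the importance-weighted reward under μ* is at most the on-policy variance: Var_{a∼μ*}(ρ(a)r(a)) ≤ Var_{a∼π}(r(a)), where Var_{a∼μ*}(ρ(a)r(a)) = Σ_{a:μ*(a)>0} μ*(a)(ρ(a)r(a))² − (Σ_{a:μ*(a)>0} μ*(a)ρ(a)r(a))² with ρ(a) = π(a)/μ*(a), and Var_{a∼π}(r(a)) = Σ_a π(a)r(a)² − (Σ_a π(a)r(a))². -/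
open Finset

/-- The feasible set `F` of the safety-constrained bandit problem: behavior policies
`μ` in the probability simplex on `A` satisfying the coverage condition
`μ a = 0 → π a * r a = 0` and the safety constraint
`∑ a, μ a * c a ≤ (1 + ε) * ∑ a, π a * c a`. -/
def banditFeasible {A : Type} [Fintype A] (π r c : A → ℝ) (ε : ℝ) : Set (A → ℝ) :=
  {μ | (∀ a, 0 ≤ μ a) ∧ (∑ a, μ a) = 1 ∧ (∀ a, μ a = 0 → π a * r a = 0) ∧
    (∑ a, μ a * c a) ≤ (1 + ε) * ∑ a, π a * c a}

/-- **Variance reduction of the optimal constrained behavior policy (bandit case).**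
Fix `ε ≥ 0` and suppose `μs ∈ F` minimizes `∑_{a : μ a > 0} π a² * r a² / μ a` over
`F`. Then the variance of the importance-weighted reward under `μs`,
`∑_{a : μs a > 0} μs a * (ρ a * r a)² − (∑_{a : μs a > 0} μs a * ρ a * r a)²` with
`ρ a = π a / μs a`, is at most the on-policy variance
`∑ a, π a * r a² − (∑ a, π a * r a)²`. -/
theorem optimal_bandit_policy_reduces_variance
    {A : Type} [Fintype A]
    (π r c : A → ℝ)
    (hπ0 : ∀ a, 0 ≤ π a) (hπ1 : (∑ a, π a) = 1)
    (hc : ∀ a, 0 ≤ c a)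
    (ε : ℝ) (hε : 0 ≤ ε)
    (μs : A → ℝ)
    (hmem : μs ∈ banditFeasible π r c ε)
    (hopt : ∀ μ ∈ banditFeasible π r c ε,
      (∑ a ∈ Finset.univ.filter (fun a => 0 < μs a), π a ^ 2 * r a ^ 2 / μs a)
        ≤ ∑ a ∈ Finset.univ.filter (fun a => 0 < μ a), π a ^ 2 * r a ^ 2 / μ a) :
    (∑ a ∈ Finset.univ.filter (fun a => 0 < μs a), μs a * (π a / μs a * r a) ^ 2)
        - (∑ a ∈ Finset.univ.filter (fun a => 0 < μs a), μs a * (π a / μs a * r a)) ^ 2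
      ≤ (∑ a, π a * r a ^ 2) - (∑ a, π a * r a) ^ 2 := by
  obtain ⟨hμ0, hμ1, hcov, hsafe⟩ := hmem
  -- π is feasible
  have hπF : π ∈ banditFeasible π r c ε := by
    refine ⟨hπ0, hπ1, fun a h => by rw [h]; ring, ?_⟩
    have h0 : 0 ≤ ∑ a, π a * c a :=
      Finset.sum_nonneg fun a _ => mul_nonneg (hπ0 a) (hc a)
    nlinarith
  have key := hopt π hπF
  -- RHS of key equals ∑ π r²
  have h1 : (∑ a ∈ Finset.univ.filter (fun a => 0 < π a), π a ^ 2 * r a ^ 2 / π a)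
      = ∑ a, π a * r a ^ 2 := by
    rw [Finset.sum_filter]
    refine Finset.sum_congr rfl fun a _ => ?_
    by_cases h : 0 < π a
    · simp only [h, if_true]
      field_simp
      try ring
    · have : π a = 0 := le_antisymm (not_lt.mp h) (hπ0 a)
      simp [this]
  -- second moment under μs equals the objective
  have h2 : (∑ a ∈ Finset.univ.filter (fun a => 0 < μs a), μs a * (π a / μs a * r a) ^ 2)
      = ∑ a ∈ Finset.univ.filter (fun a => 0 < μs a), π a ^ 2 * r a ^ 2 / μs a := by
    refine Finset.sum_congr rfl fun a ha => ?_
    have h : 0 < μs a := (Finset.mem_filter.mp ha).2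
    field_simp
    try ring
  -- mean under μs equals ∑ π r
  have h3 : (∑ a ∈ Finset.univ.filter (fun a => 0 < μs a), μs a * (π a / μs a * r a))
      = ∑ a, π a * r a := by
    rw [Finset.sum_filter]
    refine Finset.sum_congr rfl fun a _ => ?_
    by_cases h : 0 < μs a
    · simp only [h, if_true]
      field_simp
      try ring
    · have hz : μs a = 0 := le_antisymm (not_lt.mp h) (hμ0 a)
      simp [hz, hcov a hz]
  rw [h2, h3]
  linarith [key, h1.le, h1.ge]
end

section
/- For every behavior policy μ ∈ Λ, every time step t ∈ {0,…,T−1}, and every state s, the PDIS estimator is unbiased for the target policy's state value: E[G^PDIS(τ^{μ_{t:T−1}}_{t:T−1}) | S_t = s] = v_{π,t}(s), where the expectation is over trajectories generated by μ starting from S_t = s. -/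
open Finset

section MDPDefs

variable {S A : Type} [Fintype S] [Fintype A]

/-- State value `v_{π,t}(s)` of policy `π` for reward `r`, with `n` remaining steps at
time `t`; the paper's `v_{π,t}(s)` (horizon `T`) is `vval p r π (T − t) t s`. -/
noncomputable def vval (p : S → A → S → ℝ) (r : S → A → ℝ) (π : ℕ → S → A → ℝ) :
    ℕ → ℕ → S → ℝ
  | 0, _, _ => 0
  | n + 1, t, s => ∑ a, π t s a * (r s a + ∑ s', p s a s' * vval p r π n (t + 1) s')

/-- Action value `q_{π,t}(s,a) = r(s,a) + ∑_{s'} p(s'|s,a) v_{π,t+1}(s')`, where `n`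
steps remain after the current one; the paper's `q_{π,t}` is `qval p r π (T − t − 1) t`. -/
noncomputable def qval (p : S → A → S → ℝ) (r : S → A → ℝ) (π : ℕ → S → A → ℝ)
    (n t : ℕ) (s : S) (a : A) : ℝ :=
  r s a + ∑ s', p s a s' * vval p r π n (t + 1) s'

/-- `ν_{π,t}(s,a) = Var_{s' ∼ p(·|s,a)}(v_{π,t+1}(s'))`, with `n = T − t − 1`
remaining steps after the current one (in particular `ν_{π,T−1} ≡ 0` since `v_{π,T} ≡ 0`). -/
noncomputable def nuVar (p : S → A → S → ℝ) (r : S → A → ℝ) (π : ℕ → S → A → ℝ)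
    (n t : ℕ) (s : S) (a : A) : ℝ :=
  (∑ s', p s a s' * (vval p r π n (t + 1) s') ^ 2)
    - (∑ s', p s a s' * vval p r π n (t + 1) s') ^ 2

/-- Probability, under behavior policy `μ`, of the trajectory
`τ = (A_t, S_{t+1}, A_{t+1}, …, S_{t+n})` of `n` steps starting from state `s` at
time `t`: actions `A_k ∼ μ_k(·|S_k)` and states `S_{k+1} ∼ p(·|S_k, A_k)`. -/
noncomputable def trajProb (p : S → A → S → ℝ) (μ : ℕ → S → A → ℝ) :
    (n : ℕ) → ℕ → S → (Fin n → A × S) → ℝ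
  | 0, _, _, _ => 1
  | n + 1, t, s, τ =>
      μ t s (τ 0).1 * p s (τ 0).1 (τ 0).2 *
        trajProb p μ n (t + 1) (τ 0).2 (fun i => τ i.succ)

/-- PDIS return `G^PDIS(τ^{μ_{t:t+n−1}}_{t:t+n−1}) = ∑_{k=t}^{t+n−1} (∏_{j=t}^{k} ρ_j) R_{k+1}`
(in its equivalent recursive form) along trajectory `τ` from state `s` at time `t`,
where `ρ_j = π_j(A_j|S_j)/μ_j(A_j|S_j)` and `R_{k+1} = r(S_k, A_k)`. -/
noncomputable def pdis (r : S → A → ℝ) (π μ : ℕ → S → A → ℝ) :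
    (n : ℕ) → ℕ → S → (Fin n → A × S) → ℝ
  | 0, _, _, _ => 0
  | n + 1, t, s, τ =>
      π t s (τ 0).1 / μ t s (τ 0).1 *
        (r s (τ 0).1 + pdis r π μ n (t + 1) (τ 0).2 (fun i => τ i.succ))

/-- Conditional expectation `E[f(τ) | S_t = s]` over `n`-step trajectories generated
by the behavior policy `μ` from state `s` at time `t`. -/
noncomputable def expTraj (p : S → A → S → ℝ) (μ : ℕ → S → A → ℝ) (n t : ℕ) (s : S)
    (f : (Fin n → A × S) → ℝ) : ℝ :=
  ∑ τ : Fin n → A × S, trajProb p μ n t s τ * f τ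

/-- Conditional variance `Var(G^PDIS(τ^{μ_{t:T−1}}_{t:T−1}) | S_t = s)` with
`n = T − t` remaining steps. -/
noncomputable def pdisVar (p : S → A → S → ℝ) (r : S → A → ℝ) (π μ : ℕ → S → A → ℝ)
    (n t : ℕ) (s : S) : ℝ :=
  expTraj p μ n t s (fun τ => (pdis r π μ n t s τ) ^ 2)
    - (expTraj p μ n t s (pdis r π μ n t s)) ^ 2

/-- Conditional variance `Var(G^PDIS(τ^{μ_{t+1:T−1}}_{t+1:T−1}) | S_t = s, A_t = a)`,
where `S_{t+1} ∼ p(·|s,a)` and then the trajectory is generated by `μ` from `S_{t+1}`;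
here `n = T − t − 1`. -/
noncomputable def pdisVarSA (p : S → A → S → ℝ) (r : S → A → ℝ) (π μ : ℕ → S → A → ℝ)
    (n t : ℕ) (s : S) (a : A) : ℝ :=
  (∑ s', p s a s' * expTraj p μ n (t + 1) s' (fun τ => (pdis r π μ n (t + 1) s' τ) ^ 2))
    - (∑ s', p s a s' * expTraj p μ n (t + 1) s' (pdis r π μ n (t + 1) s')) ^ 2

/-- Extended reward `r̃_t(s,a)` (horizon `T`) computed with continuation behavior
policy `μ`: `r̃_{T−1}(s,a) = r(s,a)²`, and for `t ≤ T−2`,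
`r̃_t(s,a) = ν_{π,t}(s,a) + q_{π,t}(s,a)² + ∑_{s'} p(s'|s,a) Var(G^PDIS(τ^{μ_{t+1:T−1}}) | S_{t+1} = s')`. -/
noncomputable def rtilde (p : S → A → S → ℝ) (r : S → A → ℝ) (π μ : ℕ → S → A → ℝ)
    (T t : ℕ) (s : S) (a : A) : ℝ :=
  if t + 1 = T then (r s a) ^ 2
  else
    nuVar p r π (T - t - 1) t s a + (qval p r π (T - t - 1) t s a) ^ 2
      + ∑ s', p s a s' * pdisVar p r π μ (T - t - 1) (t + 1) s'

/-- Total (unconditional) variance `Var(G^PDIS(τ^{μ_{0:T−1}}_{0:T−1}))` of the PDIS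
estimator, including the randomness of the initial state `S_0 ∼ p0`. -/
noncomputable def pdisTotalVar (p : S → A → S → ℝ) (r : S → A → ℝ) (π μ : ℕ → S → A → ℝ)
    (p0 : S → ℝ) (T : ℕ) : ℝ :=
  (∑ s, p0 s * expTraj p μ T 0 s (fun τ => (pdis r π μ T 0 s τ) ^ 2))
    - (∑ s, p0 s * expTraj p μ T 0 s (pdis r π μ T 0 s)) ^ 2

/-- Feasible set of the step-wise constrained problem at time `t` and state `s`:
probability distributions `ν` on `A` satisfying the coverage condition
`ν a = 0 → π_t(a|s) q_{π,t}(s,a) = 0` and the safety constraint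
`∑ a, ν a * q^c_{μ*,t}(s,a) ≤ (1 + ε) v^c_{π,t}(s)`. -/
noncomputable def stepFeasible (p : S → A → S → ℝ) (r c : S → A → ℝ)
    (π μstar : ℕ → S → A → ℝ) (T : ℕ) (ε : ℝ) (t : ℕ) (s : S) : Set (A → ℝ) :=
  {ν | (∀ a, 0 ≤ ν a) ∧ (∑ a, ν a) = 1 ∧
    (∀ a, ν a = 0 → π t s a * qval p r π (T - t - 1) t s a = 0) ∧
    (∑ a, ν a * qval p c μstar (T - t - 1) t s a) ≤ (1 + ε) * vval p c π (T - t) t s}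

/-- Objective `∑_{a : ν a > 0} π_t(a|s)² r̃_t(s,a) / ν a` of the step-wise constrained
problem at time `t` and state `s`, where `r̃_t` is computed with continuation policy
`μ*_{t+1:T−1}`. -/
noncomputable def stepObj (p : S → A → S → ℝ) (r : S → A → ℝ) (π μstar : ℕ → S → A → ℝ)
    (T t : ℕ) (s : S) (ν : A → ℝ) : ℝ :=
  ∑ a ∈ Finset.univ.filter (fun a => 0 < ν a),
    (π t s a) ^ 2 * rtilde p r π μstar T t s a / ν a

end MDPDefs

lemma trajProb_sum {S A : Type} [Fintype S] [Fintype A]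
    (p : S → A → S → ℝ) (μ : ℕ → S → A → ℝ)
    (hp : ∀ s a, (∑ s', p s a s') = 1)
    (hμ : ∀ t s, (∑ a, μ t s a) = 1) :
    ∀ n t s, ∑ τ : Fin n → A × S, trajProb p μ n t s τ = 1 := by
  intro n
  induction n with
  | zero => intro t s; simp [trajProb]
  | succ n ih =>
    intro t s
    rw [show (∑ τ : Fin (n+1) → A × S, trajProb p μ (n+1) t s τ)
        = ∑ x : (A × S) × (Fin n → A × S), trajProb p μ (n+1) t s (Fin.cons x.1 x.2) from
      (Fintype.sum_equiv (Fin.consEquiv (fun _ => A × S)) _ _ (fun x => rfl)).symm]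
    rw [Fintype.sum_prod_type]
    have : ∀ (x : A × S) (τ' : Fin n → A × S),
        trajProb p μ (n+1) t s (Fin.cons x τ')
          = μ t s x.1 * p s x.1 x.2 * trajProb p μ n (t+1) x.2 τ' := by
      intro x τ'; simp [trajProb]
    simp only [this]
    have h2 : ∀ x : A × S,
        (∑ τ' : Fin n → A × S, μ t s x.1 * p s x.1 x.2 * trajProb p μ n (t+1) x.2 τ')
          = μ t s x.1 * p s x.1 x.2 := by
      intro x
      rw [← Finset.mul_sum, ih, mul_one]
    simp only [h2]
    rw [Fintype.sum_prod_type]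
    have : ∀ a : A, (∑ s' : S, μ t s a * p s a s') = μ t s a := by
      intro a; rw [← Finset.mul_sum, hp, mul_one]
    simp only [this, hμ]

lemma pdis_unbiased_aux {S A : Type} [Fintype S] [Fintype A]
    (T : ℕ)
    (p : S → A → S → ℝ) (r : S → A → ℝ) (π μ : ℕ → S → A → ℝ)
    (hp : ∀ s a, (∀ s', 0 ≤ p s a s') ∧ (∑ s', p s a s') = 1)
    (hπ : ∀ t s, (∀ a, 0 ≤ π t s a) ∧ (∑ a, π t s a) = 1)
    (hμ : ∀ t s, (∀ a, 0 ≤ μ t s a) ∧ (∑ a, μ t s a) = 1)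
    (hΛ : ∀ t, t < T → ∀ s a, μ t s a = 0 → π t s a * qval p r π (T - t - 1) t s a = 0) :
    ∀ n t, t + n = T → ∀ s,
      expTraj p μ n t s (pdis r π μ n t s) = vval p r π n t s := by
  intro n
  induction n with
  | zero => intro t _ s; simp [expTraj, pdis, vval]
  | succ n ih =>
    intro t htn s
    have htT : t < T := by omega
    have hTt : T - t - 1 = n := by omega
    unfold expTraj
    rw [show (∑ τ : Fin (n+1) → A × S,
          trajProb p μ (n+1) t s τ * pdis r π μ (n+1) t s τ)
        = ∑ x : (A × S) × (Fin n → A × S),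
          trajProb p μ (n+1) t s (Fin.cons x.1 x.2) *
            pdis r π μ (n+1) t s (Fin.cons x.1 x.2) from
      (Fintype.sum_equiv (Fin.consEquiv (fun _ => A × S)) _ _ (fun x => rfl)).symm]
    rw [Fintype.sum_prod_type]
    have hterm : ∀ (x : A × S) (τ' : Fin n → A × S),
        trajProb p μ (n+1) t s (Fin.cons x τ') * pdis r π μ (n+1) t s (Fin.cons x τ')
          = μ t s x.1 * (π t s x.1 / μ t s x.1) * p s x.1 x.2 *
              (trajProb p μ n (t+1) x.2 τ' * r s x.1
                + trajProb p μ n (t+1) x.2 τ' * pdis r π μ n (t+1) x.2 τ') := by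
      intro x τ'; simp [trajProb, pdis]; ring
    simp only [hterm]
    have hsum1 := trajProb_sum p μ (fun s a => (hp s a).2) (fun t s => (hμ t s).2)
    have hinner : ∀ x : A × S,
        (∑ τ' : Fin n → A × S,
          μ t s x.1 * (π t s x.1 / μ t s x.1) * p s x.1 x.2 *
            (trajProb p μ n (t+1) x.2 τ' * r s x.1
              + trajProb p μ n (t+1) x.2 τ' * pdis r π μ n (t+1) x.2 τ'))
        = μ t s x.1 * (π t s x.1 / μ t s x.1) * p s x.1 x.2 *
            (r s x.1 + vval p r π n (t+1) x.2) := by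
      intro x
      rw [← Finset.mul_sum, Finset.sum_add_distrib, ← Finset.sum_mul, hsum1, one_mul]
      have := ih (t+1) (by omega) x.2
      unfold expTraj at this
      rw [this]
    simp only [hinner]
    have hq : ∀ a : A,
        (∑ s' : S, μ t s a * (π t s a / μ t s a) * p s a s'
            * (r s a + vval p r π n (t+1) s'))
          = μ t s a * (π t s a / μ t s a) * qval p r π n t s a := by
      intro a
      have hx : ∀ s' : S,
          μ t s a * (π t s a / μ t s a) * p s a s' * (r s a + vval p r π n (t+1) s')
            = μ t s a * (π t s a / μ t s a) *
                (p s a s' * r s a + p s a s' * vval p r π n (t+1) s') := by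
        intro s'; ring
      simp only [hx]
      rw [← Finset.mul_sum, Finset.sum_add_distrib, ← Finset.sum_mul, (hp s a).2, one_mul]
      rfl
    have hv : vval p r π (n+1) t s = ∑ a, π t s a * qval p r π n t s a := rfl
    rw [Fintype.sum_prod_type, hv]
    apply Finset.sum_congr rfl
    intro a _
    rw [hq a]
    by_cases hma : μ t s a = 0
    · have h0 := hΛ t htT s a hma
      rw [hTt] at h0
      rw [hma, zero_mul, zero_mul, h0.symm]
    · have hc : μ t s a * (π t s a / μ t s a) = π t s a := by field_simp
      rw [hc]

/-- **Unbiasedness of the PDIS estimator (state values).**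
For every behavior policy `μ ∈ Λ` (i.e. each `μ_t(·|s)` is a probability distribution
and `μ_t(a|s) = 0 → π_t(a|s) q_{π,t}(s,a) = 0`), every time step `t ∈ {0,…,T−1}` and
every state `s`, `E[G^PDIS(τ^{μ_{t:T−1}}_{t:T−1}) | S_t = s] = v_{π,t}(s)`, the
expectation being over trajectories generated by `μ` from `S_t = s`. -/
theorem pdis_unbiased
    {S A : Type} [Fintype S] [Fintype A]
    (T : ℕ) (hT : 1 ≤ T)
    (p : S → A → S → ℝ) (r : S → A → ℝ) (π μ : ℕ → S → A → ℝ)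
    (hp : ∀ s a, (∀ s', 0 ≤ p s a s') ∧ (∑ s', p s a s') = 1)
    (hπ : ∀ t s, (∀ a, 0 ≤ π t s a) ∧ (∑ a, π t s a) = 1)
    (hμ : ∀ t s, (∀ a, 0 ≤ μ t s a) ∧ (∑ a, μ t s a) = 1)
    (hΛ : ∀ t, t < T → ∀ s a, μ t s a = 0 → π t s a * qval p r π (T - t - 1) t s a = 0) :
    ∀ t, t < T → ∀ s,
      expTraj p μ (T - t) t s (pdis r π μ (T - t) t s) = vval p r π (T - t) t s := by
  intro t htT s
  exact pdis_unbiased_aux T p r π μ hp hπ hμ hΛ (T - t) t (by omega) s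
end

section
/- For every behavior policy μ ∈ Λ and every state s, the conditional variance of the PDIS return satisfies the backward recursion: for t = T−1, Var(G^PDIS(τ^{μ_{t:T−1}}_{t:T−1}) | S_t = s) = Σ_{a} μ_t(a|s)·ρ_t(a|s)²·q_{π,t}(s,a)² − v_{π,t}(s)², where ρ_t(a|s) = π_t(a|s)/μ_t(a|s) and the sum is over {a : μ_t(a|s) > 0}; and for t ∈ {0,…,T−2}, Var(G^PDIS(τ^{μ_{t:T−1}}_{t:T−1}) | S_t = s) = Σ_{a} μ_t(a|s)·ρ_t(a|s)²·( Σ_{s'} p(s'|s,a)·Var(G^PDIS(τ^{μ_{t+1:T−1}}_{t+1:T−1}) | S_{t+1} = s') + ν_{π,t}(s,a) + q_{π,t}(s,a)² ) − v_{π,t}(s)². -/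
open Finset

/-!
Conditioned on the first action `a` and next state `s'`, the PDIS return is
`ρ_t(a|s) (r(s,a) + G')` with `G'` the return from `s'`. Backward induction gives
`E[G | S_t = s] = v_{π,t}(s)`: the factor `μ_t ρ_t = π_t` cancels the behavior policy, and
where `μ_t(a|s) = 0` coverage makes the missing term `π_t q_{π,t}` vanish. Given `(a, s')`, the
second moment is `ρ² ((r + v_{π,t+1}(s'))² + Var(G' | s'))`, and averaging
`(r + v_{π,t+1}(s'))²` over `s' ∼ p(·|s,a)` yields `q_{π,t}(s,a)² + ν_{π,t}(s,a)`.
-/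

/-- The search space `Λ`. -/
def Covers {S A : Type} [Fintype S] [Fintype A] (p : S → A → S → ℝ) (r : S → A → ℝ)
    (π μ : ℕ → S → A → ℝ) (T : ℕ) : Prop :=
  ∀ t, t < T → ∀ s a, μ t s a = 0 → π t s a * qval p r π (T - t - 1) t s a = 0

theorem mul_div_mul_eq_of_eq_zero_imp {K : Type*} [Field K] {m x y : K} (h : m = 0 → x * y = 0) :
    m * (x / m * y) = x * y := by
  rcases eq_or_ne m 0 with hm | hm
  · simp [hm, h hm]
  · rw [← mul_assoc, mul_div_cancel₀ x hm]

theorem Finset.sum_mul_add_sq_eq {ι R : Type*} [CommRing R] (s : Finset ι) {w f : ι → R}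
    (hw : ∑ i ∈ s, w i = 1) (c : R) :
    ∑ i ∈ s, w i * (c + f i) ^ 2
      = (c + ∑ i ∈ s, w i * f i) ^ 2
        + (∑ i ∈ s, w i * f i ^ 2 - (∑ i ∈ s, w i * f i) ^ 2) := by
  have hexp : ∀ i ∈ s,
      w i * (c + f i) ^ 2 = c ^ 2 * w i + 2 * c * (w i * f i) + w i * f i ^ 2 := fun i _ => by ring
  rw [sum_congr rfl hexp, sum_add_distrib, sum_add_distrib, ← mul_sum, ← mul_sum, hw]
  ring

theorem Fintype.sum_fin_succ_pi {α M : Type*} [Fintype α] [AddCommMonoid M] (n : ℕ)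
    (f : (Fin (n + 1) → α) → M) :
    ∑ τ, f τ = ∑ x, ∑ τ : Fin n → α, f (Fin.cons x τ) := by
  rw [← Fintype.sum_prod_type', ← (Fin.consEquiv fun _ => α).sum_comp]
  rfl

section Trajectories

variable {S A : Type} [Fintype S] [Fintype A]
  {p : S → A → S → ℝ} {r : S → A → ℝ} {π μ : ℕ → S → A → ℝ}

theorem vval_succ (n t : ℕ) (s : S) :
    vval p r π (n + 1) t s = ∑ a, π t s a * qval p r π n t s a := rfl

@[simp]
theorem nuVar_zero (t : ℕ) (s : S) (a : A) : nuVar p r π 0 t s a = 0 := by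
  simp [nuVar, vval]

@[simp]
theorem pdisVar_zero (t : ℕ) (s : S) : pdisVar p r π μ 0 t s = 0 := by
  simp [pdisVar, expTraj, pdis]

theorem qval_eq_sum (hp : ∀ s a, ∑ s', p s a s' = 1) (n t : ℕ) (s : S) (a : A) :
    qval p r π n t s a = ∑ s', p s a s' * (r s a + vval p r π n (t + 1) s') := by
  simp only [qval, mul_add, sum_add_distrib, ← sum_mul, hp, one_mul]

theorem qval_sq_add_nuVar (hp : ∀ s a, ∑ s', p s a s' = 1) (n t : ℕ) (s : S) (a : A) :
    qval p r π n t s a ^ 2 + nuVar p r π n t s a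
      = ∑ s', p s a s' * (r s a + vval p r π n (t + 1) s') ^ 2 := by
  rw [sum_mul_add_sq_eq _ (hp s a), qval, nuVar]

theorem sum_trajProb (hp : ∀ s a, ∑ s', p s a s' = 1) (hμ : ∀ t s, ∑ a, μ t s a = 1) :
    ∀ n t (s : S), ∑ τ : Fin n → A × S, trajProb p μ n t s τ = 1
  | 0, _, _ => by simp [trajProb]
  | n + 1, t, s => by
    simp only [Fintype.sum_fin_succ_pi, Fintype.sum_prod_type, trajProb, Fin.cons_zero,
      Fin.cons_succ, ← mul_sum, sum_trajProb hp hμ n, mul_one, hp, hμ]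

theorem expTraj_succ (n t : ℕ) (s : S) (f : (Fin (n + 1) → A × S) → ℝ) :
    expTraj p μ (n + 1) t s f
      = ∑ a, μ t s a * ∑ s', p s a s' *
          expTraj p μ n (t + 1) s' (fun τ => f (Fin.cons (a, s') τ)) := by
  simp only [expTraj, Fintype.sum_fin_succ_pi, Fintype.sum_prod_type, trajProb, Fin.cons_zero,
    Fin.cons_succ, mul_sum, mul_assoc]

theorem expTraj_mul_add (hp : ∀ s a, ∑ s', p s a s' = 1) (hμ : ∀ t s, ∑ a, μ t s a = 1)
    (n t : ℕ) (s : S) (c d : ℝ) (f : (Fin n → A × S) → ℝ) :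
    expTraj p μ n t s (fun τ => c * (d + f τ)) = c * (d + expTraj p μ n t s f) := by
  have hmass := sum_trajProb hp hμ n t s
  simp only [expTraj, mul_add, mul_left_comm _ c, sum_add_distrib, ← mul_sum, ← sum_mul, hmass]
  ring

theorem expTraj_mul_add_sq (hp : ∀ s a, ∑ s', p s a s' = 1) (hμ : ∀ t s, ∑ a, μ t s a = 1)
    (n t : ℕ) (s : S) (c d : ℝ) (f : (Fin n → A × S) → ℝ) :
    expTraj p μ n t s (fun τ => (c * (d + f τ)) ^ 2)
      = c ^ 2 * ((d + expTraj p μ n t s f) ^ 2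
          + (expTraj p μ n t s (fun τ => f τ ^ 2) - expTraj p μ n t s f ^ 2)) := by
  simp only [mul_pow, expTraj, ← sum_mul_add_sq_eq _ (sum_trajProb hp hμ n t s), mul_sum]
  exact sum_congr rfl fun τ _ => by ring

variable {T : ℕ} (hp : ∀ s a, ∑ s', p s a s' = 1) (hμ : ∀ t s, ∑ a, μ t s a = 1)
  (hΛ : Covers p r π μ T)
include hp hμ hΛ

theorem expTraj_pdis_eq_vval :
    ∀ n t, t + n = T → ∀ s : S, expTraj p μ n t s (pdis r π μ n t s) = vval p r π n t s
  | 0, _, _, _ => by simp [expTraj, pdis, vval]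
  | n + 1, t, ht, s => by
    rw [expTraj_succ, vval_succ]
    refine sum_congr rfl fun a _ => ?_
    have hcov := hΛ t (by omega) s a
    rw [show T - t - 1 = n by omega] at hcov
    simp only [pdis, Fin.cons_zero, Fin.cons_succ, expTraj_mul_add hp hμ,
      expTraj_pdis_eq_vval n (t + 1) (by omega), mul_left_comm (p s a _), ← mul_sum,
      ← qval_eq_sum hp, mul_div_mul_eq_of_eq_zero_imp hcov]

theorem expTraj_pdis_sq (n t : ℕ) (ht : t + n + 1 = T) (s : S) :
    expTraj p μ (n + 1) t s (fun τ => pdis r π μ (n + 1) t s τ ^ 2)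
      = ∑ a, μ t s a * (π t s a / μ t s a) ^ 2 *
          ((∑ s', p s a s' * pdisVar p r π μ n (t + 1) s')
            + nuVar p r π n t s a + qval p r π n t s a ^ 2) := by
  rw [expTraj_succ]
  refine sum_congr rfl fun a _ => ?_
  have hnext : ∀ s', expTraj p μ n (t + 1) s'
      (fun τ => (π t s a / μ t s a * (r s a + pdis r π μ n (t + 1) s' τ)) ^ 2)
        = (π t s a / μ t s a) ^ 2 * ((r s a + vval p r π n (t + 1) s') ^ 2
          + pdisVar p r π μ n (t + 1) s') := fun s' => by
    simp only [expTraj_mul_add_sq hp hμ, pdisVar,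
      expTraj_pdis_eq_vval hp hμ hΛ n (t + 1) (by omega)]
  simp only [pdis, Fin.cons_zero, Fin.cons_succ, hnext]
  simp only [mul_left_comm (p s a _), ← mul_sum, mul_add, sum_add_distrib,
    ← qval_sq_add_nuVar hp]
  ring

theorem pdisVar_succ (n t : ℕ) (ht : t + n + 1 = T) (s : S) (hμ0 : ∀ a, 0 ≤ μ t s a) :
    pdisVar p r π μ (n + 1) t s
      = (∑ a ∈ univ.filter (fun a => 0 < μ t s a),
          μ t s a * (π t s a / μ t s a) ^ 2 *
            ((∑ s', p s a s' * pdisVar p r π μ n (t + 1) s')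
              + nuVar p r π n t s a + qval p r π n t s a ^ 2))
        - vval p r π (n + 1) t s ^ 2 := by
  rw [pdisVar, expTraj_pdis_sq hp hμ hΛ n t ht,
    expTraj_pdis_eq_vval hp hμ hΛ (n + 1) t (by omega),
    sum_filter_of_ne fun a _ ha => (hμ0 a).lt_of_ne' (left_ne_zero_of_mul (left_ne_zero_of_mul ha))]

end Trajectories

theorem pdis_variance_recursion_general
    {S A : Type} [Fintype S] [Fintype A]
    (T : ℕ) (hT : 1 ≤ T)
    (p : S → A → S → ℝ) (r : S → A → ℝ) (π μ : ℕ → S → A → ℝ)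
    (hp : ∀ s a, (∀ s', 0 ≤ p s a s') ∧ (∑ s', p s a s') = 1)
    (hμ : ∀ t s, (∀ a, 0 ≤ μ t s a) ∧ (∑ a, μ t s a) = 1)
    (hΛ : ∀ t, t < T → ∀ s a, μ t s a = 0 → π t s a * qval p r π (T - t - 1) t s a = 0) :
    (∀ s : S,
      pdisVar p r π μ 1 (T - 1) s
        = (∑ a ∈ Finset.univ.filter (fun a => 0 < μ (T - 1) s a),
            μ (T - 1) s a * (π (T - 1) s a / μ (T - 1) s a) ^ 2
              * (qval p r π 0 (T - 1) s a) ^ 2)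
          - (vval p r π 1 (T - 1) s) ^ 2) ∧
    (∀ t, t + 1 < T → ∀ s : S,
      pdisVar p r π μ (T - t) t s
        = (∑ a ∈ Finset.univ.filter (fun a => 0 < μ t s a),
            μ t s a * (π t s a / μ t s a) ^ 2
              * ((∑ s', p s a s' * pdisVar p r π μ (T - t - 1) (t + 1) s')
                  + nuVar p r π (T - t - 1) t s a + (qval p r π (T - t - 1) t s a) ^ 2))
          - (vval p r π (T - t) t s) ^ 2) := by
  have hp1 s a := (hp s a).2
  have hμ1 t s := (hμ t s).2
  refine ⟨fun s => ?_, fun t ht s => ?_⟩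
  · have h := pdisVar_succ hp1 hμ1 hΛ 0 (T - 1) (by omega) s (hμ _ s).1
    simpa using h
  · have h := pdisVar_succ hp1 hμ1 hΛ (T - t - 1) t (by omega) s (hμ t s).1
    rwa [show T - t - 1 + 1 = T - t by omega] at h

/-- **Backward recursion for the conditional variance of the PDIS return.**
For every behavior policy `μ ∈ Λ` and every state `s`: at `t = T−1`,
`Var(G^PDIS(τ^{μ_{t:T−1}}) | S_t = s)
  = ∑_{a : μ_t(a|s)>0} μ_t(a|s) ρ_t(a|s)² q_{π,t}(s,a)² − v_{π,t}(s)²`,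
and for `t ∈ {0,…,T−2}`,
`Var(G^PDIS(τ^{μ_{t:T−1}}) | S_t = s)
  = ∑_{a : μ_t(a|s)>0} μ_t(a|s) ρ_t(a|s)² (∑_{s'} p(s'|s,a) Var(G^PDIS(τ^{μ_{t+1:T−1}}) | S_{t+1}=s')
      + ν_{π,t}(s,a) + q_{π,t}(s,a)²) − v_{π,t}(s)²`,
where `ρ_t(a|s) = π_t(a|s)/μ_t(a|s)`. -/
theorem pdis_variance_recursion
    {S A : Type} [Fintype S] [Fintype A]
    (T : ℕ) (hT : 1 ≤ T)
    (p : S → A → S → ℝ) (r : S → A → ℝ) (π μ : ℕ → S → A → ℝ)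
    (hp : ∀ s a, (∀ s', 0 ≤ p s a s') ∧ (∑ s', p s a s') = 1)
    (hπ : ∀ t s, (∀ a, 0 ≤ π t s a) ∧ (∑ a, π t s a) = 1)
    (hμ : ∀ t s, (∀ a, 0 ≤ μ t s a) ∧ (∑ a, μ t s a) = 1)
    (hΛ : ∀ t, t < T → ∀ s a, μ t s a = 0 → π t s a * qval p r π (T - t - 1) t s a = 0) :
    (∀ s : S,
      pdisVar p r π μ 1 (T - 1) s
        = (∑ a ∈ Finset.univ.filter (fun a => 0 < μ (T - 1) s a),
            μ (T - 1) s a * (π (T - 1) s a / μ (T - 1) s a) ^ 2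
              * (qval p r π 0 (T - 1) s a) ^ 2)
          - (vval p r π 1 (T - 1) s) ^ 2) ∧
    (∀ t, t + 1 < T → ∀ s : S,
      pdisVar p r π μ (T - t) t s
        = (∑ a ∈ Finset.univ.filter (fun a => 0 < μ t s a),
            μ t s a * (π t s a / μ t s a) ^ 2
              * ((∑ s', p s a s' * pdisVar p r π μ (T - t - 1) (t + 1) s')
                  + nuVar p r π (T - t - 1) t s a + (qval p r π (T - t - 1) t s a) ^ 2))
          - (vval p r π (T - t) t s) ^ 2) :=
  pdis_variance_recursion_general T hT p r π μ hp hμ hΛ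
end
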